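/- arXiv:1402.3562 — 4 statements merged into one kernel-verified Lean document; each statement's English description precedes it below -/
import Mathlib

section
/- Let v : (0,∞) → ℝ be strictly concave with strictly decreasing derivative v', let θ > 0, x > 0, and suppose d ∈ (0,x) satisfies (1+θ)·v'(x) = v'(x - d). Then for any loss z₀ with 0 < z₀ ≤ d, the maximizer over I ∈ [0, z₀] of I ↦ v(x - z₀ + I) - (1+θ)·I·v'(x) is I = 0, and for any loss z₀ with d < z₀ < x, the maximizer is I = z₀ - d. -/
open Set

/-! With `c := (1 + θ) v'(x) = v'(x - d)`, the objective is `g (x - z₀ + I) + c (x - z₀)` for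
`g t := v t - c t`. Since `g' = v' - c` and `v'` is decreasing, `g` increases up to `x - d` and
decreases after it. For `z₀ ≤ d` the whole range `[x - z₀, x]` lies right of `x - d`, so `I = 0` is
best; for `z₀ > d` the point `x - d` is reached at `I = z₀ - d`. -/

section TangentGap

variable {D : Set ℝ} {v v' : ℝ → ℝ} {p : ℝ}

lemma hasDerivAt_sub_mul {f : ℝ → ℝ} {f' c t : ℝ} (hf : HasDerivAt f f' t) :
    HasDerivAt (fun s => f s - c * s) (f' - c) t :=
  (hf.sub ((hasDerivAt_id' t).const_mul c)).congr_deriv (by ring)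

lemma monotoneOn_sub_deriv_mul (hD : Convex ℝ D) (hderiv : ∀ y ∈ D, HasDerivAt v (v' y) y)
    (hanti : AntitoneOn v' D) (hp : p ∈ D) :
    MonotoneOn (fun t => v t - v' p * t) (D ∩ Iic p) := by
  have hderiv' : ∀ t ∈ D ∩ Iic p, HasDerivAt (fun s => v s - v' p * s) (v' t - v' p) t :=
    fun t ht => hasDerivAt_sub_mul (hderiv t ht.1)
  refine monotoneOn_of_hasDerivWithinAt_nonneg (hD.inter (convex_Iic p))
    (fun t ht => (hderiv' t ht).continuousAt.continuousWithinAt)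
    (fun t ht => (hderiv' t (interior_subset ht)).hasDerivWithinAt) fun t ht => ?_
  obtain ⟨htD, htp⟩ := interior_subset ht
  exact sub_nonneg.2 (hanti htD hp htp)

lemma antitoneOn_sub_deriv_mul (hD : Convex ℝ D) (hderiv : ∀ y ∈ D, HasDerivAt v (v' y) y)
    (hanti : AntitoneOn v' D) (hp : p ∈ D) :
    AntitoneOn (fun t => v t - v' p * t) (D ∩ Ici p) := by
  have hderiv' : ∀ t ∈ D ∩ Ici p, HasDerivAt (fun s => v s - v' p * s) (v' t - v' p) t :=
    fun t ht => hasDerivAt_sub_mul (hderiv t ht.1)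
  refine antitoneOn_of_hasDerivWithinAt_nonpos (hD.inter (convex_Ici p))
    (fun t ht => (hderiv' t ht).continuousAt.continuousWithinAt)
    (fun t ht => (hderiv' t (interior_subset ht)).hasDerivWithinAt) fun t ht => ?_
  obtain ⟨htD, hpt⟩ := interior_subset ht
  exact sub_nonpos.2 (hanti hp htD hpt)

lemma sub_deriv_mul_le (hD : Convex ℝ D) (hderiv : ∀ y ∈ D, HasDerivAt v (v' y) y)
    (hanti : AntitoneOn v' D) (hp : p ∈ D) {t : ℝ} (ht : t ∈ D) :
    v t - v' p * t ≤ v p - v' p * p := by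
  rcases le_total t p with htp | hpt
  · exact monotoneOn_sub_deriv_mul hD hderiv hanti hp ⟨ht, htp⟩ ⟨hp, self_mem_Iic⟩ htp
  · exact antitoneOn_sub_deriv_mul hD hderiv hanti hp ⟨hp, self_mem_Ici⟩ ⟨ht, hpt⟩ hpt

end TangentGap

theorem deductible_insurance_structure_general
    (v v' : ℝ → ℝ) (θ x d : ℝ)
    (hd : d ∈ Set.Ioo (0:ℝ) x)
    (hderiv : ∀ y ∈ Set.Ioi (0:ℝ), HasDerivAt v (v' y) y)
    (hanti : StrictAntiOn v' (Set.Ioi (0:ℝ)))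
    (hfoc : (1 + θ) * v' x = v' (x - d)) :
    (∀ z₀, 0 < z₀ → z₀ ≤ d →
      ∀ I ∈ Set.Icc (0:ℝ) z₀,
        v (x - z₀ + I) - (1 + θ) * I * v' x ≤
          v (x - z₀ + 0) - (1 + θ) * 0 * v' x) ∧
    (∀ z₀, d < z₀ → z₀ < x →
      ∀ I ∈ Set.Icc (0:ℝ) z₀,
        v (x - z₀ + I) - (1 + θ) * I * v' x ≤
          v (x - z₀ + (z₀ - d)) - (1 + θ) * (z₀ - d) * v' x) := by
  have hp : x - d ∈ Ioi (0:ℝ) := sub_pos.2 hd.2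
  have hobj : ∀ z₀ I, v (x - z₀ + I) - (1 + θ) * I * v' x =
      (v (x - z₀ + I) - v' (x - d) * (x - z₀ + I)) + v' (x - d) * (x - z₀) := by
    intro z₀ I
    rw [← hfoc]
    ring
  refine ⟨fun z₀ _ hzd I hI => ?_, fun z₀ _ hzx I hI => ?_⟩
  · have hgap := antitoneOn_sub_deriv_mul (convex_Ioi 0) hderiv hanti.antitoneOn hp
      (a := x - z₀) (b := x - z₀ + I) ⟨mem_Ioi.2 (by linarith [hd.2]), mem_Ici.2 (by linarith)⟩
      ⟨mem_Ioi.2 (by linarith [hd.2, hI.1]), mem_Ici.2 (by linarith [hI.1])⟩ (by linarith [hI.1])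
    rw [hobj, hobj, add_zero]
    linarith
  · have hgap := sub_deriv_mul_le (convex_Ioi 0) hderiv hanti.antitoneOn hp
      (t := x - z₀ + I) (mem_Ioi.2 (by linarith [hI.1]))
    rw [hobj, hobj, show x - z₀ + (z₀ - d) = x - d by ring]
    linarith

theorem deductible_insurance_structure
    (v v' : ℝ → ℝ) (θ x d : ℝ)
    (hθ : 0 < θ) (hx : 0 < x) (hd : d ∈ Set.Ioo (0:ℝ) x)
    (hderiv : ∀ y ∈ Set.Ioi (0:ℝ), HasDerivAt v (v' y) y)
    (hconc : StrictConcaveOn ℝ (Set.Ioi (0:ℝ)) v)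
    (hanti : StrictAntiOn v' (Set.Ioi (0:ℝ)))
    (hfoc : (1 + θ) * v' x = v' (x - d)) :
    (∀ z₀, 0 < z₀ → z₀ ≤ d →
      ∀ I ∈ Set.Icc (0:ℝ) z₀,
        v (x - z₀ + I) - (1 + θ) * I * v' x ≤
          v (x - z₀ + 0) - (1 + θ) * 0 * v' x) ∧
    (∀ z₀, d < z₀ → z₀ < x →
      ∀ I ∈ Set.Icc (0:ℝ) z₀,
        v (x - z₀ + I) - (1 + θ) * I * v' x ≤
          v (x - z₀ + (z₀ - d)) - (1 + θ) * (z₀ - d) * v' x) :=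
  deductible_insurance_structure_general v v' θ x d hd hderiv hanti hfoc
end

section
/- Let η ∈ (0,1), θ > 0 with ν := θ/(1+θ) < η, and let l be uniformly distributed on (0,1). Then E[ln(1 - η·l + (η·l - ν)⁺)] = (1/η - 1)·ln(1+θ) - θ/(η(1+θ)). -/
/-!
Since `1 - ηl + (ηl - ν)⁺ = max (1 - ηl) (1 - ν)`, the substitution `u = 1 - ηl` turns the
expectation into `η⁻¹ ∫_{1-η}^1 log (max u m)` with `m = 1 - ν = 1/(1+θ)`. The condition `ν < η`
places `m` inside `[1 - η, 1]`, so this integral is the constant `log m` on `[1 - η, m]` plus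
`∫_m^1 log u`.
-/

open MeasureTheory Real

theorem sub_add_max_sub_zero {α : Type*} [AddCommGroup α] [LinearOrder α] [IsOrderedAddMonoid α]
    (a b c : α) : a - b + max (b - c) 0 = max (a - b) (a - c) := by
  rcases le_total b c with h | h
  · rw [max_eq_right (sub_nonpos.mpr h), max_eq_left (sub_le_sub_left h a), add_zero]
  · rw [max_eq_left (sub_nonneg.mpr h), max_eq_right (sub_le_sub_left h a)]
    abel

theorem integral_log_max_const {a b m : ℝ} (hm : 0 < m) (ham : a ≤ m) (hmb : m ≤ b) :
    ∫ u in a..b, log (max u m) = (m - a) * log m + (b * log b - m * log m - b + m) := by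
  have hcont : Continuous fun u => log (max u m) :=
    (continuous_id.max continuous_const).log fun u => (hm.trans_le (le_max_right u m)).ne'
  rw [← intervalIntegral.integral_add_adjacent_intervals (b := m)
    (hcont.intervalIntegrable _ _) (hcont.intervalIntegrable _ _)]
  have below : ∫ u in a..m, log (max u m) = ∫ _ in a..m, log m :=
    intervalIntegral.integral_congr fun u hu => by
      rw [Set.uIcc_of_le ham] at hu
      simp only [max_eq_right hu.2]
  have above : ∫ u in m..b, log (max u m) = ∫ u in m..b, log u :=
    intervalIntegral.integral_congr fun u hu => by
      rw [Set.uIcc_of_le hmb] at hu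
      simp only [max_eq_left hu.1]
  rw [below, above, intervalIntegral.integral_const, integral_log, smul_eq_mul]

theorem integral_log_max_one_sub_mul {η m : ℝ} (hη : 0 < η) (hm : 0 < m) (hm1 : m ≤ 1)
    (hηm : 1 - η ≤ m) :
    ∫ x in (0:ℝ)..1, log (max (1 - η * x) m) = (1 - 1 / η) * log m - (1 - m) / η := by
  rw [intervalIntegral.integral_comp_sub_mul (fun u => log (max u m)) hη.ne', mul_one, mul_zero,
    sub_zero, integral_log_max_const hm hηm hm1, log_one, smul_eq_mul]
  field_simp
  ring

theorem expected_log_post_insurance (η θ : ℝ)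
    (hη : η ∈ Set.Ioo (0:ℝ) 1) (hθ : 0 < θ) (hd : θ / (1 + θ) < η) :
    ∫ l in Set.Ioo (0:ℝ) 1,
        Real.log (1 - η * l + max (η * l - θ / (1 + θ)) 0)
      = (1 / η - 1) * Real.log (1 + θ) - θ / (η * (1 + θ)) := by
  have h1θ : 0 < 1 + θ := by linarith
  have hm : 1 - θ / (1 + θ) = (1 + θ)⁻¹ := by field_simp; ring
  simp_rw [sub_add_max_sub_zero, hm]
  rw [← integral_Ioc_eq_integral_Ioo, ← intervalIntegral.integral_of_le zero_le_one,
    integral_log_max_one_sub_mul hη.1 (inv_pos.mpr h1θ) (inv_le_one_of_one_le₀ (by linarith))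
      (by linarith), log_inv]
  field_simp
  ring
end

section
/- Let η ∈ (0,1), ν ∈ (0,η), α < 0 with α ≠ -1, and let l be uniformly distributed on (0,1). Then E[(1 - η·l + (η·l - ν)⁺)^α] = (1-ν)^α·(1 - ν/η - (1-ν)/(η(1+α))) + 1/(η(1+α)). -/
/-!
Since `1 - η l + (η l - ν)⁺ = max (1 - η l) (1 - ν)`, the integrand is `(1 - η l) ^ α` for
`l ≤ ν / η` and the constant `(1 - ν) ^ α` afterwards. The first piece is a power integral after
the substitution `x = 1 - η l`, the second contributes `(1 - ν / η) (1 - ν) ^ α`.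
-/

open MeasureTheory Set

lemma add_max_sub_zero {G : Type*} [AddCommGroup G] [LinearOrder G] [IsOrderedAddMonoid G]
    (x y : G) : x + max (y - x) 0 = max x y := by
  rw [← max_add_add_left, add_sub_cancel, add_zero, max_comm]

lemma integral_one_sub_mul_rpow {η α c : ℝ} (hη : η ≠ 0)
    (hα : -1 < α ∨ α ≠ -1 ∧ (0 : ℝ) ∉ uIcc (1 - η * c) 1) :
    ∫ l in (0 : ℝ)..c, (1 - η * l) ^ α = (1 - (1 - η * c) ^ (α + 1)) / (η * (α + 1)) := by
  rw [intervalIntegral.integral_comp_sub_mul (fun x : ℝ => x ^ α) hη, mul_zero, sub_zero,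
    integral_rpow hα, Real.one_rpow, smul_eq_mul, inv_mul_eq_div, div_div, mul_comm (α + 1)]

lemma integral_max_one_sub_mul_rpow {η ν : ℝ} (α : ℝ) (hη : 0 < η) (hν : ν ∈ Icc 0 η)
    (hν1 : ν < 1) :
    ∫ l in (0 : ℝ)..1, max (1 - η * l) (1 - ν) ^ α
      = (∫ l in (0 : ℝ)..ν / η, (1 - η * l) ^ α) + (1 - ν / η) * (1 - ν) ^ α := by
  have hcont : Continuous fun l : ℝ => max (1 - η * l) (1 - ν) ^ α :=
    (by fun_prop : Continuous fun l : ℝ => max (1 - η * l) (1 - ν)).rpow_const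
      fun l => .inl (by linarith [le_max_right (1 - η * l) (1 - ν)] : (0 : ℝ) < _).ne'
  have hc0 : 0 ≤ ν / η := div_nonneg hν.1 hη.le
  have hc1 : ν / η ≤ 1 := (div_le_one hη).mpr hν.2
  rw [← intervalIntegral.integral_add_adjacent_intervals (b := ν / η)
    (hcont.intervalIntegrable _ _) (hcont.intervalIntegrable _ _)]
  have hbelow : EqOn (fun l => max (1 - η * l) (1 - ν) ^ α) (fun l => (1 - η * l) ^ α)
      (uIcc 0 (ν / η)) := fun l hl => by
    rw [uIcc_of_le hc0] at hl
    have : η * l ≤ ν := (le_div_iff₀' hη).mp hl.2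
    simp only [max_eq_left (by linarith : 1 - ν ≤ 1 - η * l)]
  have habove : EqOn (fun l => max (1 - η * l) (1 - ν) ^ α) (fun _ => (1 - ν) ^ α)
      (uIcc (ν / η) 1) := fun l hl => by
    rw [uIcc_of_le hc1] at hl
    have : ν ≤ η * l := (div_le_iff₀' hη).mp hl.1
    simp only [max_eq_right (by linarith : 1 - η * l ≤ 1 - ν)]
  rw [intervalIntegral.integral_congr hbelow, intervalIntegral.integral_congr habove,
    intervalIntegral.integral_const, smul_eq_mul]

theorem expected_power_post_insurance_general (η ν α : ℝ)
    (hη : η ∈ Set.Ioo (0:ℝ) 1) (hν : ν ∈ Set.Ioo (0:ℝ) η)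
    (hα1 : α ≠ -1) :
    ∫ l in Set.Ioo (0:ℝ) 1, (1 - η * l + max (η * l - ν) 0) ^ α
      = (1 - ν) ^ α * (1 - ν / η - (1 - ν) / (η * (1 + α))) + 1 / (η * (1 + α)) := by
  obtain ⟨hη0, hη1⟩ := hη
  have hν1 : 0 < 1 - ν := by linarith [hν.2]
  have hην : η * (ν / η) = ν := mul_div_cancel₀ ν hη0.ne'
  have hmax : ∀ l : ℝ, 1 - η * l + max (η * l - ν) 0 = max (1 - η * l) (1 - ν) := fun l => by
    simpa only [sub_sub_sub_cancel_left] using add_max_sub_zero (1 - η * l) (1 - ν)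
  have hα : -1 < α ∨ α ≠ -1 ∧ (0 : ℝ) ∉ uIcc (1 - η * (ν / η)) 1 := by
    refine .inr ⟨hα1, fun h => ?_⟩
    rw [hην, uIcc_of_le (by linarith [hν.1])] at h
    linarith [h.1]
  rw [← integral_Ioc_eq_integral_Ioo, ← intervalIntegral.integral_of_le zero_le_one]
  simp only [hmax]
  rw [integral_max_one_sub_mul_rpow α hη0 (Ioo_subset_Icc_self hν) (by linarith),
    integral_one_sub_mul_rpow hη0.ne' hα, hην, Real.rpow_add_one hν1.ne']
  have h1α : 1 + α ≠ 0 := fun h => hα1 (by linarith)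
  have hα1' : α + 1 ≠ 0 := fun h => hα1 (by linarith)
  field_simp
  ring

theorem expected_power_post_insurance (η ν α : ℝ)
    (hη : η ∈ Set.Ioo (0:ℝ) 1) (hν : ν ∈ Set.Ioo (0:ℝ) η)
    (hα : α < 0) (hα1 : α ≠ -1) :
    ∫ l in Set.Ioo (0:ℝ) 1, (1 - η * l + max (η * l - ν) 0) ^ α
      = (1 - ν) ^ α * (1 - ν / η - (1 - ν) / (η * (1 + α))) + 1 / (η * (1 + α)) :=
  expected_power_post_insurance_general η ν α hη hν hα1
end

section
/- Let η ∈ (0,1), θ > 0, and suppose η·l > θ/(1+θ) for a constant l ∈ (0,1). Then -ln(1+θ) - η·l·(1+θ) + θ - ln(1 - η·l) > 0. -/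
/-! With `g = (1 + θ) * (1 - η * l)` the claim reads `log g < g - 1`, the strict form of
`log x ≤ x - 1`; the hypothesis `θ / (1 + θ) < η * l` says exactly that `g < 1`, so `g ≠ 1`. -/

open Real

lemma Real.log_add_log_lt_mul_sub_one {a b : ℝ} (ha : 0 < a) (hb : 0 < b) (hab : a * b ≠ 1) :
    log a + log b < a * b - 1 := by
  rw [← log_mul ha.ne' hb.ne']
  exact log_lt_sub_one_of_pos (mul_pos ha hb) hab

theorem insurance_gain_positive_log (η θ l : ℝ)
    (hη : η ∈ Set.Ioo (0:ℝ) 1) (hθ : 0 < θ) (hl : l ∈ Set.Ioo (0:ℝ) 1)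
    (hbuy : θ / (1 + θ) < η * l) :
    0 < -Real.log (1 + θ) - η * l * (1 + θ) + θ - Real.log (1 - η * l) := by
  obtain ⟨hη0, hη1⟩ := hη
  have hηl : η * l < 1 := mul_lt_one_of_nonneg_of_lt_one_left hη0.le hη1 hl.2.le
  have hθ_lt : θ < η * l * (1 + θ) := (div_lt_iff₀ (by linarith)).mp hbuy
  have hg : (1 + θ) * (1 - η * l) < 1 := by linarith
  have key := log_add_log_lt_mul_sub_one (by linarith) (by linarith) hg.ne
  linarith
end
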